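/- Gromov-hyperbolicity of geodesic metric spaces is a quasi-isometry invariant: if f : X → Y is a (λ, C)-quasi-isometry between geodesic metric spaces and X is Gromov-hyperbolic, then Y is Gromov-hyperbolic. -/

import Mathlib

/-!
STATEMENT 7: Gromov-hyperbolicity of geodesic metric spaces is a quasi-isometry
invariant: if `f : X → Y` is a `(λ, C)`-quasi-isometry between geodesic metric
spaces and `X` is Gromov-hyperbolic, then `Y` is Gromov-hyperbolic.
-/
open Set

noncomputable section

variable {X : Type*}

/-- `γ` is a unit-speed geodesic segment from `x` to `y`, parametrized on
`[0, dist x y]`. -/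
def IsGeodesicSegBetween [MetricSpace X] (γ : ℝ → X) (x y : X) : Prop :=
  γ 0 = x ∧ γ (dist x y) = y ∧
    ∀ s ∈ Icc (0 : ℝ) (dist x y), ∀ t ∈ Icc (0 : ℝ) (dist x y),
      dist (γ s) (γ t) = |s - t|

/-- A geodesic metric space: any two points are joined by a geodesic segment. -/
def GeodesicSpace (X : Type*) [MetricSpace X] : Prop :=
  ∀ x y : X, ∃ γ : ℝ → X, IsGeodesicSegBetween γ x y

/-- The image (side) of a geodesic segment from `x` to `y`. -/
def SideSet [MetricSpace X] (γ : ℝ → X) (x y : X) : Set X :=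
  γ '' Icc (0 : ℝ) (dist x y)

/-- A triangle with sides `s₁ s₂ s₃` is `δ`-thin: each side is contained in the
`δ`-neighbourhood of the union of the other two sides. -/
def ThinTriangle [MetricSpace X] (δ : ℝ) (s₁ s₂ s₃ : Set X) : Prop :=
  (∀ p ∈ s₁, ∃ q ∈ s₂ ∪ s₃, dist p q ≤ δ) ∧
  (∀ p ∈ s₂, ∃ q ∈ s₁ ∪ s₃, dist p q ≤ δ) ∧
  (∀ p ∈ s₃, ∃ q ∈ s₁ ∪ s₂, dist p q ≤ δ)

/-- Gromov hyperbolicity of a (geodesic) metric space: there is `δ ≥ 0` such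
that all geodesic triangles are `δ`-thin. -/
def GromovHyperbolic (X : Type*) [MetricSpace X] : Prop :=
  ∃ δ : ℝ, 0 ≤ δ ∧ ∀ (A B C : X) (γa γb γc : ℝ → X),
    IsGeodesicSegBetween γa B C → IsGeodesicSegBetween γb A C →
      IsGeodesicSegBetween γc A B →
        ThinTriangle δ (SideSet γa B C) (SideSet γb A C) (SideSet γc A B)

/-- Euclidean comparison angle at the vertex `p` of the triangle `p x y`. -/
def compAngle [MetricSpace X] (p x y : X) : ℝ :=
  Real.arccos ((dist p x ^ 2 + dist p y ^ 2 - dist x y ^ 2) /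
    (2 * dist p x * dist p y))

/-- `z` lies (metrically) between `x` and `y`. -/
def MetricBtw [MetricSpace X] (x z y : X) : Prop :=
  dist x z + dist z y = dist x y

/-- The (Alexandrov) angle at `p` between the geodesics from `p` to `x` and from
`p` to `y`, as the infimum of comparison angles over points between `p` and the
endpoints; in a nonpositively curved space this is the usual Riemannian angle. -/
def angleAt [MetricSpace X] (p x y : X) : ℝ :=
  sInf {θ : ℝ | ∃ u v : X, MetricBtw p u x ∧ u ≠ p ∧ MetricBtw p v y ∧ v ≠ p ∧
    θ = compAngle p u v}

/-- The CAT(0) comparison inequality: distances from a vertex to points of the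
opposite side of any geodesic triangle are bounded by the corresponding
distances in the Euclidean comparison triangle. -/
def CATzero (X : Type*) [MetricSpace X] : Prop :=
  ∀ (x y z : X) (γ : ℝ → X), IsGeodesicSegBetween γ y z →
    ∀ s ∈ Icc (0 : ℝ) (dist y z),
      dist x (γ s) ^ 2 ≤ (1 - s / dist y z) * dist x y ^ 2 +
        (s / dist y z) * dist x z ^ 2 - s * (dist y z - s)

/-- The comparison angle in the hyperbolic plane (curvature `-1`) at the vertex
adjacent to sides of lengths `b`, `c` and opposite a side of length `a`,
via the hyperbolic law of cosines. -/
def hypCompAngle (a b c : ℝ) : ℝ :=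
  Real.arccos ((Real.cosh b * Real.cosh c - Real.cosh a) /
    (Real.sinh b * Real.sinh c))

/-- The CAT(-1) comparison inequality (comparison with triangles in the
hyperbolic plane of curvature `-1`), via the hyperbolic law of cosines; for a
simply connected complete Riemannian manifold it is equivalent to `sec ≤ -1`. -/
def CATminusOne (X : Type*) [MetricSpace X] : Prop :=
  ∀ (x y z : X) (γ : ℝ → X), IsGeodesicSegBetween γ y z →
    ∀ s ∈ Icc (0 : ℝ) (dist y z),
      Real.cosh (dist x (γ s)) ≤
        Real.cosh (dist x y) * Real.cosh s -
          Real.sinh (dist x y) * Real.sinh s *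
            Real.cos (hypCompAngle (dist x z) (dist x y) (dist y z))

/-- `f` is a `(Λ, C)`-quasi-isometry: it distorts distances at most affinely in
both directions and its image is `C`-dense. -/
def IsQuasiIsometry {Y : Type*} [MetricSpace X] [MetricSpace Y]
    (Λ C : ℝ) (f : X → Y) : Prop :=
  1 ≤ Λ ∧ 0 ≤ C ∧
  (∀ x y : X, (1 / Λ) * dist x y - C ≤ dist (f x) (f y) ∧
    dist (f x) (f y) ≤ Λ * dist x y + C) ∧
  (∀ z : Y, ∃ x : X, dist z (f x) ≤ C)


/-!
A quasi-inverse `g : Y → X` of `f` is a quasi-isometric embedding. Sampling a geodesic of `Y` at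
unit times and applying `g` gives a discrete quasi-geodesic in `X`, which by the Morse lemma is
uniformly Hausdorff-close to any geodesic of `X` with the same endpoints. So `g` carries a geodesic
triangle of `Y` close to a geodesic triangle of `X`, which is slim, and the lower distance bound for
`g` pulls this slimness back to `Y`.

The Morse lemma follows Bridson–Haefliger (III.H.1.7): by bisection, a geodesic stays within
`δ log₂ ℓ + g₀` of any chain of `ℓ` steps of length `≤ g₀` joining its endpoints; at a point of the
geodesic at nearly maximal distance `D` from the quasi-geodesic this yields `D = O(log D)`.
-/

open Metric

lemma sideSet_reverse [MetricSpace X] (γ : ℝ → X) (x y : X) :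
    SideSet (fun u => γ (dist x y - u)) y x = SideSet γ x y := by
  rw [SideSet, SideSet, dist_comm y x]
  ext p
  constructor <;> rintro ⟨u, hu, rfl⟩
  · exact ⟨dist x y - u, ⟨by linarith [hu.2], by linarith [hu.1]⟩, rfl⟩
  · exact ⟨dist x y - u, ⟨by linarith [hu.2], by linarith [hu.1]⟩, by simp⟩

namespace IsGeodesicSegBetween

variable [MetricSpace X] {γ : ℝ → X} {x y : X}

lemma dist_left (h : IsGeodesicSegBetween γ x y) {s : ℝ} (hs : s ∈ Icc 0 (dist x y)) :
    dist x (γ s) = s := by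
  rw [← h.1, h.2.2 0 ⟨le_rfl, dist_nonneg⟩ s hs, zero_sub, abs_neg, abs_of_nonneg hs.1]

lemma dist_left_le_of_mem (h : IsGeodesicSegBetween γ x y) {p : X} (hp : p ∈ SideSet γ x y) :
    dist x p ≤ dist x y := by
  obtain ⟨s, hs, rfl⟩ := hp
  exact (h.dist_left hs).trans_le hs.2

lemma reverse (h : IsGeodesicSegBetween γ x y) :
    IsGeodesicSegBetween (fun u => γ (dist x y - u)) y x := by
  refine ⟨by simpa using h.2.1, by simp [dist_comm y x, h.1], fun s hs t ht => ?_⟩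
  rw [dist_comm y x] at hs ht
  rw [h.2.2 _ ⟨by linarith [hs.2], by linarith [hs.1]⟩ _ ⟨by linarith [ht.2], by linarith [ht.1]⟩,
    abs_sub_comm]
  ring_nf

lemma dist_right_le_of_mem (h : IsGeodesicSegBetween γ x y) {p : X} (hp : p ∈ SideSet γ x y) :
    dist p y ≤ dist x y := by
  rw [dist_comm p, dist_comm x]
  exact h.reverse.dist_left_le_of_mem (by rwa [sideSet_reverse])

lemma restrict (h : IsGeodesicSegBetween γ x y) {a b : ℝ} (ha : 0 ≤ a) (hab : a ≤ b)
    (hb : b ≤ dist x y) : IsGeodesicSegBetween (fun u => γ (a + u)) (γ a) (γ b) := by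
  have hd : dist (γ a) (γ b) = b - a := by
    rw [h.2.2 a ⟨ha, hab.trans hb⟩ b ⟨ha.trans hab, hb⟩, abs_of_nonpos (by linarith), neg_sub]
  refine ⟨by simp, by simp [hd], fun s hs t ht => ?_⟩
  rw [hd] at hs ht
  rw [h.2.2 _ ⟨by linarith [hs.1], by linarith [hs.2]⟩ _ ⟨by linarith [ht.1], by linarith [ht.2]⟩]
  ring_nf

end IsGeodesicSegBetween

/-- `ThinTriangle` for all triangles, with the sides oriented as `x → y` and `x → w → y`. -/
def TrianglesSlim (δ : ℝ) (X : Type*) [MetricSpace X] : Prop :=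
  ∀ (x y w : X) (γ γ₁ γ₂ : ℝ → X), IsGeodesicSegBetween γ x y → IsGeodesicSegBetween γ₁ x w →
    IsGeodesicSegBetween γ₂ w y →
      ∀ p ∈ SideSet γ x y, ∃ q ∈ SideSet γ₁ x w ∪ SideSet γ₂ w y, dist p q ≤ δ

lemma gromovHyperbolic_iff [MetricSpace X] :
    GromovHyperbolic X ↔ ∃ δ, 0 ≤ δ ∧ TrianglesSlim δ X := by
  constructor
  · rintro ⟨δ, hδ, hthin⟩
    refine ⟨δ, hδ, fun x y w γ γ₁ γ₂ h h₁ h₂ p hp => ?_⟩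
    have := (hthin w x y γ γ₂ _ h h₂ h₁.reverse).1 p hp
    rwa [sideSet_reverse, Set.union_comm] at this
  · rintro ⟨δ, hδ, hslim⟩
    refine ⟨δ, hδ, fun A B C γa γb γc ha hb hc => ⟨fun p hp => ?_, fun p hp => ?_, fun p hp => ?_⟩⟩
    · have := hslim B C A γa _ γb ha hc.reverse hb p hp
      rwa [sideSet_reverse, Set.union_comm] at this
    · rw [Set.union_comm]
      exact hslim A C B γb γc γa hb hc ha p hp
    · have := hslim A B C γc γb _ hc hb ha.reverse p hp
      rwa [sideSet_reverse, Set.union_comm] at this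

namespace TrianglesSlim

variable [MetricSpace X] {δ : ℝ}

lemma mono (hslim : TrianglesSlim δ X) {δ' : ℝ} (hδ : δ ≤ δ') : TrianglesSlim δ' X :=
  fun x y w γ γ₁ γ₂ h h₁ h₂ p hp =>
    let ⟨q, hq, hpq⟩ := hslim x y w γ γ₁ γ₂ h h₁ h₂ p hp
    ⟨q, hq, hpq.trans hδ⟩

lemma exists_dist_le_of_quadrilateral (hslim : TrianglesSlim δ X) (hX : GeodesicSpace X)
    (hδ : 0 ≤ δ) {x y u v : X} {γ γ₁ γ₂ γ₃ : ℝ → X} (h : IsGeodesicSegBetween γ x y)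
    (h₁ : IsGeodesicSegBetween γ₁ x u) (h₂ : IsGeodesicSegBetween γ₂ u v)
    (h₃ : IsGeodesicSegBetween γ₃ v y) {p : X} (hp : p ∈ SideSet γ x y) :
    ∃ q ∈ SideSet γ₁ x u ∪ SideSet γ₂ u v ∪ SideSet γ₃ v y, dist p q ≤ 2 * δ := by
  obtain ⟨β, hβ⟩ := hX x v
  obtain ⟨q, hq | hq, hpq⟩ := hslim x y v γ β γ₃ h hβ h₃ p hp
  · obtain ⟨q', hq', hqq'⟩ := hslim x v u β γ₁ γ₂ hβ h₁ h₂ q hq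
    exact ⟨q', Or.inl hq', by linarith [dist_triangle p q q']⟩
  · exact ⟨q, Or.inr hq, by linarith⟩

end TrianglesSlim

/-- A discrete `(Λ, K)`-quasi-geodesic `z 0, …, z n` with steps of length at most `g₀`. -/
def IsQuasiGeodesicChain [MetricSpace X] (g₀ Λ K : ℝ) (z : ℕ → X) (n : ℕ) : Prop :=
  (∀ i < n, dist (z i) (z (i + 1)) ≤ g₀) ∧
    ∀ i ≤ n, ∀ j ≤ n, |(i : ℝ) - j| ≤ Λ * dist (z i) (z j) + K

namespace IsQuasiGeodesicChain

variable [MetricSpace X] {g₀ Λ K : ℝ} {z : ℕ → X} {n : ℕ}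

lemma dist_le (hz : IsQuasiGeodesicChain g₀ Λ K z n) {i j : ℕ} (hi : i ≤ n) (hj : j ≤ n) :
    dist (z i) (z j) ≤ g₀ * |(i : ℝ) - j| := by
  wlog hij : i ≤ j generalizing i j
  · rw [dist_comm, abs_sub_comm]
    exact this hj hi (by omega)
  calc dist (z i) (z j) ≤ ∑ l ∈ Finset.Ico i j, dist (z l) (z (l + 1)) := dist_le_Ico_sum_dist z hij
    _ ≤ (Finset.Ico i j).card • g₀ :=
        Finset.sum_le_card_nsmul _ _ _ fun l hl => hz.1 l (by simp at hl; omega)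
    _ = g₀ * |(i : ℝ) - j| := by
        rw [Nat.card_Ico, nsmul_eq_mul, mul_comm, abs_of_nonpos (by simpa using hij), neg_sub,
          Nat.cast_sub hij]

lemma map {Y : Type*} [MetricSpace Y] (hz : IsQuasiGeodesicChain g₀ Λ K z n) (hΛ : 0 ≤ Λ)
    {g : X → Y} {a b a' b' : ℝ} (ha : 0 ≤ a) (hup : ∀ u v, dist (g u) (g v) ≤ a * dist u v + b)
    (hlow : ∀ u v, dist u v ≤ a' * dist (g u) (g v) + b') :
    IsQuasiGeodesicChain (a * g₀ + b) (Λ * a') (Λ * b' + K) (g ∘ z) n := by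
  refine ⟨fun i hi => (hup _ _).trans ?_, fun i hi j hj => (hz.2 i hi j hj).trans ?_⟩
  · gcongr
    exact hz.1 i hi
  · have := mul_le_mul_of_nonneg_left (hlow (z i) (z j)) hΛ
    simp only [Function.comp_apply]
    linarith

end IsQuasiGeodesicChain

def unitSample (γ : ℝ → X) (L : ℝ) (a : ℕ) : X := γ (min (a : ℝ) L)

lemma min_natCast_mem_Icc {L : ℝ} (hL : 0 ≤ L) (a : ℕ) : min (a : ℝ) L ∈ Icc 0 L :=
  ⟨le_min a.cast_nonneg hL, min_le_right _ _⟩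

lemma unitSample_mem_sideSet [MetricSpace X] (γ : ℝ → X) (x y : X) (a : ℕ) :
    unitSample γ (dist x y) a ∈ SideSet γ x y :=
  ⟨_, min_natCast_mem_Icc dist_nonneg a, rfl⟩

namespace IsGeodesicSegBetween

variable [MetricSpace X] {γ : ℝ → X} {x y : X}

lemma unitSample_zero (h : IsGeodesicSegBetween γ x y) : unitSample γ (dist x y) 0 = x := by
  rw [unitSample, Nat.cast_zero, min_eq_left dist_nonneg, h.1]

lemma unitSample_ceil (h : IsGeodesicSegBetween γ x y) :
    unitSample γ (dist x y) ⌈dist x y⌉₊ = y := by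
  rw [unitSample, min_eq_right (Nat.le_ceil _), h.2.1]

lemma isQuasiGeodesicChain_unitSample (h : IsGeodesicSegBetween γ x y) :
    IsQuasiGeodesicChain 1 1 1 (unitSample γ (dist x y)) ⌈dist x y⌉₊ := by
  set L := dist x y
  have hdist : ∀ a b : ℕ,
      dist (unitSample γ L a) (unitSample γ L b) = |min (a : ℝ) L - min (b : ℝ) L| :=
    fun a b => h.2.2 _ (min_natCast_mem_Icc dist_nonneg a) _ (min_natCast_mem_Icc dist_nonneg b)
  refine ⟨fun a _ => ?_, fun a ha b hb => ?_⟩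
  · rw [hdist]
    refine (abs_min_sub_min_le_max _ _ _ _).trans ?_
    simp
  · have hceil : ((⌈L⌉₊ : ℕ) : ℝ) < L + 1 := Nat.ceil_lt_add_one dist_nonneg
    have ha' : (a : ℝ) ≤ ⌈L⌉₊ := by exact_mod_cast ha
    have hb' : (b : ℝ) ≤ ⌈L⌉₊ := by exact_mod_cast hb
    have hma : (a : ℝ) - 1 ≤ min (a : ℝ) L := le_min (by linarith) (by linarith)
    have hmb : (b : ℝ) - 1 ≤ min (b : ℝ) L := le_min (by linarith) (by linarith)
    rw [hdist, one_mul, abs_le]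
    constructor <;>
      linarith [le_abs_self (min (a : ℝ) L - min (b : ℝ) L),
        neg_abs_le (min (a : ℝ) L - min (b : ℝ) L), min_le_left (a : ℝ) L, min_le_left (b : ℝ) L]

lemma exists_dist_unitSample_le (h : IsGeodesicSegBetween γ x y) {s : ℝ}
    (hs : s ∈ Icc 0 (dist x y)) :
    ∃ a ≤ ⌈dist x y⌉₊, dist (γ s) (unitSample γ (dist x y) a) ≤ 1 := by
  refine ⟨⌊s⌋₊, (Nat.floor_le_floor hs.2).trans (Nat.floor_le_ceil _), ?_⟩
  have hfl : (⌊s⌋₊ : ℝ) ≤ s := Nat.floor_le hs.1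
  have hmin : min (⌊s⌋₊ : ℝ) (dist x y) = ⌊s⌋₊ := min_eq_left (hfl.trans hs.2)
  rw [unitSample, h.2.2 s hs _ (min_natCast_mem_Icc dist_nonneg _), hmin,
    abs_of_nonneg (by linarith)]
  linarith [Nat.lt_floor_add_one s]

end IsGeodesicSegBetween

lemma TrianglesSlim.exists_dist_le_of_chain [MetricSpace X] {δ g₀ : ℝ}
    (hslim : TrianglesSlim δ X) (hX : GeodesicSpace X) (hg₀ : 0 ≤ g₀)
    {z : ℕ → X} {n : ℕ} (hz : ∀ i < n, dist (z i) (z (i + 1)) ≤ g₀) (k : ℕ) :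
    ∀ {i j : ℕ}, i ≤ n → j ≤ n → i ≤ j + 2 ^ k → j ≤ i + 2 ^ k →
      ∀ {γ : ℝ → X}, IsGeodesicSegBetween γ (z i) (z j) →
        ∀ p ∈ SideSet γ (z i) (z j), ∃ l ≤ n, dist p (z l) ≤ δ * k + g₀ := by
  induction k with
  | zero =>
    intro i j hi hj hij hji γ hγ p hp
    refine ⟨i, hi, ?_⟩
    rw [dist_comm, CharP.cast_eq_zero, mul_zero, zero_add]
    refine (hγ.dist_left_le_of_mem hp).trans ?_
    rcases (show j = i ∨ j = i + 1 ∨ i = j + 1 by omega) with rfl | rfl | rfl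
    · rwa [dist_self]
    · exact hz i (by omega)
    · rw [dist_comm]
      exact hz j (by omega)
  | succ k ih =>
    intro i j hi hj hij hji γ hγ p hp
    rw [pow_succ] at hij hji
    obtain ⟨β₁, hβ₁⟩ := hX (z i) (z ((i + j) / 2))
    obtain ⟨β₂, hβ₂⟩ := hX (z ((i + j) / 2)) (z j)
    obtain ⟨q, hq, hpq⟩ := hslim _ _ _ γ β₁ β₂ hγ hβ₁ hβ₂ p hp
    obtain ⟨l, hl, hql⟩ : ∃ l ≤ n, dist q (z l) ≤ δ * k + g₀ := by
      rcases hq with hq | hq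
      · exact ih hi (by omega) (by omega) (by omega) hβ₁ q hq
      · exact ih (by omega) hj (by omega) (by omega) hβ₂ q hq
    refine ⟨l, hl, ?_⟩
    push_cast
    linarith [dist_triangle p q (z l)]

/-- `D = O(log D)` forces `D = O(1)`. -/
lemma exists_forall_le_of_two_pow_le {δ a : ℝ} (hδ : 0 ≤ δ) (ha : 0 ≤ a) (b c : ℝ) :
    ∃ M, ∀ (D : ℝ) (k : ℕ), (2 : ℝ) ^ k ≤ a * D + b → D ≤ δ * k + c → D ≤ M := by
  refine ⟨2 * δ * (2 * a * δ + |a * c + b|) + c, fun D k hk hD => ?_⟩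
  -- `s` is at least `(k + 1) / 2` and at most `√(a D + b)`, so `s² = O(s)`
  set s : ℝ := 2 ^ (k / 2)
  have hs : 1 ≤ s := one_le_pow₀ one_le_two
  have hss : s * s ≤ 2 ^ k := by
    rw [← pow_add]
    exact pow_le_pow_right₀ one_le_two (by omega)
  have hks : (k : ℝ) + 1 ≤ 2 * s := by
    have h₁ : k + 1 ≤ 2 * (k / 2 + 1) := by omega
    have h₂ : ((k / 2 + 1 : ℕ) : ℝ) ≤ (2 : ℝ) ^ (k / 2) := by
      exact_mod_cast Nat.succ_le_of_lt (Nat.lt_two_pow_self (n := k / 2))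
    have h₃ : ((k + 1 : ℕ) : ℝ) ≤ 2 * (k / 2 + 1 : ℕ) := by exact_mod_cast h₁
    push_cast at h₂ h₃ ⊢
    linarith
  have hDs : D ≤ 2 * δ * s + c := by nlinarith
  have hsq : s * s ≤ (2 * a * δ + |a * c + b|) * s := by
    nlinarith [le_abs_self (a * c + b), abs_nonneg (a * c + b), mul_le_mul_of_nonneg_left hDs ha]
  have hs' : s ≤ 2 * a * δ + |a * c + b| := le_of_mul_le_mul_right hsq (by linarith)
  nlinarith

/-- `sm` and `sp` are `s₀ ∓ 2 r` clamped to `[0, dist x y]`, where `r` is the distance from `γ s₀`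
to `S`. -/
lemma IsGeodesicSegBetween.exists_far_endpoints [MetricSpace X] {γ : ℝ → X} {x y : X}
    (hγ : IsGeodesicSegBetween γ x y) {S : Set X} (hx : x ∈ S) (hy : y ∈ S) {D : ℝ}
    (hD : ∀ s ∈ Icc 0 (dist x y), infDist (γ s) S ≤ D) {s₀ : ℝ} (hs₀ : s₀ ∈ Icc 0 (dist x y))
    (hDs₀ : D - 1 ≤ infDist (γ s₀) S) :
    ∃ sm sp, 0 ≤ sm ∧ sm ≤ s₀ ∧ s₀ ≤ sp ∧ sp ≤ dist x y ∧ sp - sm ≤ 4 * D ∧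
      D - 2 ≤ dist (γ s₀) (γ sm) - infDist (γ sm) S ∧
      D - 2 ≤ dist (γ s₀) (γ sp) - infDist (γ sp) S := by
  set L := dist x y
  set r := infDist (γ s₀) S
  have hr : 0 ≤ r := infDist_nonneg
  have hrD : r ≤ D := hD s₀ hs₀
  have hfar : ∀ t ∈ Icc 0 L, (γ t ∈ S ∨ |s₀ - t| = 2 * r) →
      D - 2 ≤ dist (γ s₀) (γ t) - infDist (γ t) S := by
    rintro t ht (hS | hdist)
    · rw [infDist_zero_of_mem hS]
      linarith [infDist_le_dist_of_mem (x := γ s₀) hS]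
    · rw [hγ.2.2 _ hs₀ _ ht, hdist]
      linarith [hD t ht]
  refine ⟨max 0 (s₀ - 2 * r), min L (s₀ + 2 * r), le_max_left _ _, max_le hs₀.1 (by linarith),
    le_min hs₀.2 (by linarith), min_le_left _ _, ?_, ?_, ?_⟩
  · linarith [le_max_right 0 (s₀ - 2 * r), min_le_right L (s₀ + 2 * r)]
  · refine hfar _ ⟨le_max_left _ _, max_le dist_nonneg (by linarith [hs₀.2])⟩ ?_
    rcases le_total (s₀ - 2 * r) 0 with h | h
    · rw [max_eq_left h, hγ.1]
      exact Or.inl hx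
    · rw [max_eq_right h, sub_sub_cancel, abs_of_nonneg (by linarith)]
      exact Or.inr rfl
  · refine hfar _ ⟨le_min dist_nonneg (by linarith [hs₀.1]), min_le_left _ _⟩ ?_
    rcases le_total L (s₀ + 2 * r) with h | h
    · rw [min_eq_left h, hγ.2.1]
      exact Or.inl hy
    · rw [min_eq_right h, sub_add_cancel_left, abs_neg, abs_of_nonneg (by linarith)]
      exact Or.inr rfl

lemma exists_infDist_image_Iic_eq [MetricSpace X] (z : ℕ → X) (n : ℕ) (x : X) :
    ∃ i ≤ n, infDist x (z '' Iic n) = dist x (z i) := by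
  obtain ⟨_, ⟨i, hi, rfl⟩, h⟩ :=
    ((finite_Iic n).image z).isCompact.exists_infDist_eq_dist ⟨z 0, 0, n.zero_le, rfl⟩ x
  exact ⟨i, hi, h⟩

namespace TrianglesSlim

variable [MetricSpace X] {δ g₀ Λ K : ℝ} {z : ℕ → X} {n : ℕ} {γ : ℝ → X}

/-- The Bridson–Haefliger argument: the chain between the points nearest to `γ sm` and `γ sp` has
`O(D)` steps, and closing it up by geodesics gives a quadrilateral with `γ s₀` on one side; the
closing sides stay far from `γ s₀`, so slimness bounds `D` by the logarithm of `O(D)`. -/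
lemma exists_two_pow_le_of_infDist (hslim : TrianglesSlim δ X) (hX : GeodesicSpace X)
    (hδ : 0 ≤ δ) (hg₀ : 0 ≤ g₀) (hΛ : 0 ≤ Λ) (hz : IsQuasiGeodesicChain g₀ Λ K z n)
    (hγ : IsGeodesicSegBetween γ (z 0) (z n)) {D : ℝ}
    (hD : ∀ s ∈ Icc 0 (dist (z 0) (z n)), infDist (γ s) (z '' Iic n) ≤ D) {s₀ : ℝ}
    (hs₀ : s₀ ∈ Icc 0 (dist (z 0) (z n))) (hDs₀ : D - 1 ≤ infDist (γ s₀) (z '' Iic n)) :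
    ∃ k : ℕ, (2 : ℝ) ^ k ≤ 12 * Λ * D + (2 * K + 2) ∧ D ≤ δ * k + (2 * δ + g₀ + 2) := by
  set S := z '' Iic n
  have hmem : ∀ i ≤ n, z i ∈ S := fun i hi => ⟨i, hi, rfl⟩
  have hnearest := fun t => exists_infDist_image_Iic_eq z n (γ t)
  obtain ⟨sm, sp, hsm, hsms₀, hs₀sp, hsp, hspsm, hfarm, hfarp⟩ :=
    hγ.exists_far_endpoints (hmem 0 n.zero_le) (hmem n le_rfl) hD hs₀ hDs₀
  obtain ⟨im, him, hdm⟩ := hnearest sm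
  obtain ⟨ip, hip, hdp⟩ := hnearest sp
  obtain ⟨β₁, hβ₁⟩ := hX (γ sm) (z im)
  obtain ⟨β₂, hβ₂⟩ := hX (z im) (z ip)
  obtain ⟨β₃, hβ₃⟩ := hX (z ip) (γ sp)
  have hγ' := hγ.restrict hsm (hsms₀.trans hs₀sp) hsp
  have hdsmsp : dist (γ sm) (γ sp) = sp - sm := by
    rw [hγ.2.2 _ ⟨hsm, by linarith⟩ _ ⟨by linarith, hsp⟩, abs_of_nonpos (by linarith), neg_sub]
  have hs₀' : γ s₀ ∈ SideSet (fun u => γ (sm + u)) (γ sm) (γ sp) :=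
    ⟨s₀ - sm, ⟨by linarith, by rw [hdsmsp]; linarith⟩, by simp⟩
  obtain ⟨q, hq, hpq⟩ := hslim.exists_dist_le_of_quadrilateral hX hδ hγ' hβ₁ hβ₂ hβ₃ hs₀'
  have hgap : |(im : ℝ) - ip| ≤ 6 * Λ * D + K := by
    have hdist : dist (z im) (z ip) ≤ 6 * D := by
      have := dist_triangle4 (z im) (γ sm) (γ sp) (z ip)
      rw [dist_comm (z im) (γ sm), ← hdm, ← hdp, hdsmsp] at this
      linarith [hD sm ⟨hsm, by linarith⟩, hD sp ⟨by linarith, hsp⟩]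
    nlinarith [hz.2 im him ip hip]
  obtain ⟨m, hm, hm'⟩ := exists_nat_pow_near (x := |(im : ℝ) - ip| + 1) (y := 2)
    (by linarith [abs_nonneg ((im : ℝ) - ip)]) one_lt_two
  refine ⟨m + 1, by rw [pow_succ]; linarith, ?_⟩
  have hk : 0 ≤ δ * (m + 1 : ℕ) := by positivity
  rcases hq with (hq | hq) | hq
  · linarith [hβ₁.dist_left_le_of_mem hq, dist_triangle (γ s₀) q (γ sm), dist_comm q (γ sm)]
  · have h₁ : (im : ℝ) ≤ ip + 2 ^ (m + 1) := by linarith [le_abs_self ((im : ℝ) - ip)]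
    have h₂ : (ip : ℝ) ≤ im + 2 ^ (m + 1) := by linarith [neg_abs_le ((im : ℝ) - ip)]
    obtain ⟨l, hl, hql⟩ := hslim.exists_dist_le_of_chain hX hg₀ hz.1 (m + 1) him hip
      (by exact_mod_cast h₁) (by exact_mod_cast h₂) hβ₂ q hq
    linarith [dist_triangle (γ s₀) q (z l), hDs₀.trans (infDist_le_dist_of_mem (hmem l hl))]
  · linarith [hβ₃.dist_right_le_of_mem hq, dist_triangle (γ s₀) q (γ sp), dist_comm (z ip) (γ sp)]

/-- **Morse lemma** for discrete quasi-geodesics. -/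
theorem exists_forall_dist_chain_le (hslim : TrianglesSlim δ X) (hX : GeodesicSpace X)
    (hδ : 0 ≤ δ) (hg₀ : 0 ≤ g₀) (hΛ : 0 ≤ Λ) :
    ∃ M, ∀ {z : ℕ → X} {n : ℕ}, IsQuasiGeodesicChain g₀ Λ K z n →
      ∀ {γ : ℝ → X}, IsGeodesicSegBetween γ (z 0) (z n) →
        ∀ s ∈ Icc 0 (dist (z 0) (z n)), ∃ i ≤ n, dist (γ s) (z i) ≤ M := by
  obtain ⟨M, hM⟩ :=
    exists_forall_le_of_two_pow_le hδ (by positivity : 0 ≤ 12 * Λ) (2 * K + 2) (2 * δ + g₀ + 2)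
  refine ⟨M, fun {z n} hz {γ} hγ s hs => ?_⟩
  set S := z '' Iic n
  set T := (fun s => infDist (γ s) S) '' Icc 0 (dist (z 0) (z n))
  have hbdd : BddAbove T := by
    refine ⟨dist (z 0) (z n), ?_⟩
    rintro _ ⟨t, ht, rfl⟩
    calc infDist (γ t) S ≤ dist (γ t) (z 0) := infDist_le_dist_of_mem ⟨0, n.zero_le, rfl⟩
      _ = t := by rw [dist_comm, hγ.dist_left ht]
      _ ≤ _ := ht.2
  have hD : ∀ t ∈ Icc 0 (dist (z 0) (z n)), infDist (γ t) S ≤ sSup T :=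
    fun t ht => le_csSup hbdd ⟨t, ht, rfl⟩
  obtain ⟨_, ⟨s₀, hs₀, rfl⟩, hs₀D⟩ :=
    exists_lt_of_lt_csSup (s := T) ⟨_, s, hs, rfl⟩ (sub_one_lt (sSup T))
  obtain ⟨k, hk, hDk⟩ :=
    hslim.exists_two_pow_le_of_infDist hX hδ hg₀ hΛ hz hγ hD hs₀ hs₀D.le
  obtain ⟨i, hi, hdi⟩ := exists_infDist_image_Iic_eq z n (γ s)
  exact ⟨i, hi, hdi ▸ (hD s hs).trans (hM _ k hk hDk)⟩

end TrianglesSlim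

lemma exists_abs_sub_le_of_abs_sub_succ_le {a : ℕ → ℝ} {B x : ℝ} (hB : 0 ≤ B) {T : ℕ}
    (hstep : ∀ k < T, |a (k + 1) - a k| ≤ B) (h0 : a 0 ≤ x) (hT : x ≤ a T) :
    ∃ k ≤ T, |x - a k| ≤ B := by
  induction T with
  | zero => exact ⟨0, le_rfl, by rwa [le_antisymm hT h0, sub_self, abs_zero]⟩
  | succ T ih =>
    by_cases hxT : x ≤ a T
    · obtain ⟨k, hk, hxk⟩ := ih (fun k hk => hstep k (by omega)) hxT
      exact ⟨k, by omega, hxk⟩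
    · refine ⟨T + 1, le_rfl, ?_⟩
      rw [abs_sub_comm, abs_of_nonneg (by linarith)]
      linarith [le_abs_self (a (T + 1) - a T), hstep T (by omega)]

/-- The points of `γ` at integer times have nearest chain indices that move by bounded amounts and
sweep from `0` to `n`, so they pass close to every index. -/
lemma IsQuasiGeodesicChain.exists_dist_geodesic_le [MetricSpace X] {g₀ Λ K M : ℝ} {z : ℕ → X}
    {n : ℕ} (hz : IsQuasiGeodesicChain g₀ Λ K z n) (hg₀ : 0 ≤ g₀) (hΛ : 0 ≤ Λ) {γ : ℝ → X}
    (hγ : IsGeodesicSegBetween γ (z 0) (z n))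
    (hnear : ∀ s ∈ Icc 0 (dist (z 0) (z n)), ∃ i ≤ n, dist (γ s) (z i) ≤ M) {i : ℕ} (hi : i ≤ n) :
    ∃ s ∈ Icc 0 (dist (z 0) (z n)), dist (z i) (γ s) ≤ M + g₀ * (Λ * (2 * M + 1) + K) := by
  set L := dist (z 0) (z n)
  set T := ⌈L⌉₊
  choose j hj hjM using fun a : ℕ => hnear _ (min_natCast_mem_Icc dist_nonneg a)
  have hjz : ∀ a, dist (z (j a)) (unitSample γ L a) ≤ M := fun a => by
    rw [dist_comm]
    exact hjM a
  have hM : 0 ≤ M := dist_nonneg.trans (hjz 0)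
  set B := Λ * (2 * M + 1) + K
  have hend : ∀ a, ∀ l ≤ n, unitSample γ L a = z l → |(l : ℝ) - j a| ≤ B := fun a l hl hal => by
    have := hz.2 l hl (j a) (hj a)
    rw [dist_comm, ← hal] at this
    nlinarith [hjz a]
  have hstep : ∀ a < T, |((j (a + 1) : ℕ) : ℝ) - j a| ≤ B := fun a ha => by
    have hd : dist (z (j (a + 1))) (z (j a)) ≤ 2 * M + 1 := by
      linarith [hjz a, hjz (a + 1), hγ.isQuasiGeodesicChain_unitSample.1 a ha,
        dist_triangle4 (z (j (a + 1))) (unitSample γ L (a + 1)) (unitSample γ L a) (z (j a)),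
        dist_comm (unitSample γ L a) (z (j a)),
        dist_comm (unitSample γ L (a + 1)) (unitSample γ L a)]
    linarith [hz.2 _ (hj (a + 1)) _ (hj a), mul_le_mul_of_nonneg_left hd hΛ]
  obtain ⟨a, -, ha⟩ : ∃ a ≤ T, |(i : ℝ) - j a| ≤ B := by
    have hB : 0 ≤ B := (abs_nonneg _).trans (hend 0 0 n.zero_le hγ.unitSample_zero)
    rcases le_or_gt (i : ℝ) (j 0) with h0 | h0
    · refine ⟨0, T.zero_le, ?_⟩
      have := hend 0 0 n.zero_le hγ.unitSample_zero
      rw [Nat.cast_zero, zero_sub, abs_neg] at this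
      rw [abs_of_nonpos (by linarith)]
      linarith [le_abs_self ((j 0 : ℕ) : ℝ), (Nat.cast_nonneg i : (0 : ℝ) ≤ i)]
    rcases le_or_gt ((j T : ℕ) : ℝ) i with hT | hT
    · refine ⟨T, le_rfl, ?_⟩
      have := hend T n le_rfl hγ.unitSample_ceil
      have hin : (i : ℝ) ≤ n := by exact_mod_cast hi
      rw [abs_of_nonneg (by linarith)] at this ⊢
      linarith
    exact exists_abs_sub_le_of_abs_sub_succ_le hB hstep h0.le hT.le
  refine ⟨_, min_natCast_mem_Icc dist_nonneg a, (?_ : dist (z i) (unitSample γ L a) ≤ _)⟩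
  linarith [dist_triangle (z i) (z (j a)) (unitSample γ L a), hjz a, hz.dist_le hi (hj a),
    mul_le_mul_of_nonneg_left ha hg₀]

namespace TrianglesSlim

variable {Y : Type*} [MetricSpace X] [MetricSpace Y] {δ : ℝ} {g : Y → X} {a b a' b' : ℝ}

lemma exists_image_geodesic_near (hslim : TrianglesSlim δ X) (hX : GeodesicSpace X)
    (hδ : 0 ≤ δ) (ha : 0 ≤ a) (hb : 0 ≤ b) (ha' : 0 ≤ a')
    (hup : ∀ u v, dist (g u) (g v) ≤ a * dist u v + b)
    (hlow : ∀ u v, dist u v ≤ a' * dist (g u) (g v) + b') :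
    ∃ M M', ∀ {P Q : Y} {σ : ℝ → Y} {γ : ℝ → X}, IsGeodesicSegBetween σ P Q →
      IsGeodesicSegBetween γ (g P) (g Q) →
        (∀ x ∈ SideSet γ (g P) (g Q), ∃ y ∈ SideSet σ P Q, dist x (g y) ≤ M) ∧
          ∀ y ∈ SideSet σ P Q, ∃ x ∈ SideSet γ (g P) (g Q), dist (g y) x ≤ M' := by
  have hg₀ : 0 ≤ a + b := by positivity
  obtain ⟨M, hM⟩ := hslim.exists_forall_dist_chain_le (K := b' + 1) hX hδ hg₀ ha'
  refine ⟨M, a + b + (M + (a + b) * (a' * (2 * M + 1) + (b' + 1))), fun {P Q σ γ} hσ hγ => ?_⟩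
  set z := g ∘ unitSample σ (dist P Q)
  have hz : IsQuasiGeodesicChain (a + b) a' (b' + 1) z ⌈dist P Q⌉₊ := by
    simpa using hσ.isQuasiGeodesicChain_unitSample.map zero_le_one ha hup hlow
  have hends : z 0 = g P ∧ z ⌈dist P Q⌉₊ = g Q :=
    ⟨congrArg g hσ.unitSample_zero, congrArg g hσ.unitSample_ceil⟩
  have hγ' : IsGeodesicSegBetween γ (z 0) (z ⌈dist P Q⌉₊) := by rwa [hends.1, hends.2]
  have hnear := hM hz hγ'
  rw [hends.1, hends.2] at hnear
  refine ⟨?_, ?_⟩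
  · rintro _ ⟨s, hs, rfl⟩
    obtain ⟨i, -, hi⟩ := hnear s hs
    exact ⟨_, unitSample_mem_sideSet σ P Q i, hi⟩
  · rintro _ ⟨s, hs, rfl⟩
    obtain ⟨i, hi, hsi⟩ := hσ.exists_dist_unitSample_le hs
    obtain ⟨t, ht, hit⟩ :=
      hz.exists_dist_geodesic_le hg₀ ha' hγ' (by rwa [hends.1, hends.2]) hi
    rw [hends.1, hends.2] at ht
    refine ⟨γ t, ⟨t, ht, rfl⟩, ?_⟩
    have hsz : dist (g (σ s)) (z i) ≤ a + b :=
      (hup _ _).trans (by linarith [mul_le_mul_of_nonneg_left hsi ha])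
    linarith [dist_triangle (g (σ s)) (z i) (γ t)]

lemma of_quasiIsometricEmbedding (hslim : TrianglesSlim δ X) (hX : GeodesicSpace X)
    (hδ : 0 ≤ δ) (ha : 0 ≤ a) (hb : 0 ≤ b) (ha' : 0 ≤ a')
    (hup : ∀ u v, dist (g u) (g v) ≤ a * dist u v + b)
    (hlow : ∀ u v, dist u v ≤ a' * dist (g u) (g v) + b') :
    ∃ δ', TrianglesSlim δ' Y := by
  obtain ⟨M, M', hM⟩ := hslim.exists_image_geodesic_near hX hδ ha hb ha' hup hlow
  refine ⟨a' * (M' + δ + M) + b', fun x y w σ σ₁ σ₂ hσ hσ₁ hσ₂ p hp => ?_⟩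
  obtain ⟨γ, hγ⟩ := hX (g x) (g y)
  obtain ⟨γ₁, hγ₁⟩ := hX (g x) (g w)
  obtain ⟨γ₂, hγ₂⟩ := hX (g w) (g y)
  obtain ⟨p', hp', hpp'⟩ := (hM hσ hγ).2 p hp
  obtain ⟨p'', hp'', hp'p''⟩ := hslim _ _ _ γ γ₁ γ₂ hγ hγ₁ hγ₂ p' hp'
  obtain ⟨q, hq, hp''q⟩ : ∃ q ∈ SideSet σ₁ x w ∪ SideSet σ₂ w y, dist p'' (g q) ≤ M := by
    rcases hp'' with hp'' | hp''
    · obtain ⟨q, hq, h⟩ := (hM hσ₁ hγ₁).1 p'' hp''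
      exact ⟨q, Or.inl hq, h⟩
    · obtain ⟨q, hq, h⟩ := (hM hσ₂ hγ₂).1 p'' hp''
      exact ⟨q, Or.inr hq, h⟩
  refine ⟨q, hq, (hlow p q).trans ?_⟩
  have := dist_triangle4 (g p) p' p'' (g q)
  gcongr
  linarith

end TrianglesSlim

namespace IsQuasiIsometry

variable {Y : Type*} [MetricSpace X] [MetricSpace Y] {Λ C : ℝ} {f : X → Y} {g : Y → X}

lemma dist_quasiInverse_le (hf : IsQuasiIsometry Λ C f) (hg : ∀ y, dist y (f (g y)) ≤ C)
    (u v : Y) : dist (g u) (g v) ≤ Λ * dist u v + 3 * Λ * C := by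
  obtain ⟨hΛ, -, hdist, -⟩ := hf
  have h' : 1 / Λ * dist (g u) (g v) ≤ dist u v + 3 * C := by
    linarith [(hdist (g u) (g v)).1, dist_triangle4 (f (g u)) u v (f (g v)), hg u, hg v,
      dist_comm (f (g u)) u]
  calc dist (g u) (g v) = Λ * (1 / Λ * dist (g u) (g v)) := by field_simp
    _ ≤ Λ * (dist u v + 3 * C) := by gcongr
    _ = _ := by ring

lemma dist_le_quasiInverse (hf : IsQuasiIsometry Λ C f) (hg : ∀ y, dist y (f (g y)) ≤ C)
    (u v : Y) : dist u v ≤ Λ * dist (g u) (g v) + 3 * C := by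
  linarith [dist_triangle4 u (f (g u)) (f (g v)) v, hg u, hg v, dist_comm (f (g v)) v,
    (hf.2.2.1 (g u) (g v)).2]

end IsQuasiIsometry

theorem gromovHyperbolic_of_quasiIsometry_general
    (X Y : Type*) [MetricSpace X] [MetricSpace Y]
    (hX : GeodesicSpace X)
    (Λ C : ℝ) (f : X → Y) (hf : IsQuasiIsometry (X := X) Λ C f)
    (hhyp : GromovHyperbolic X) : GromovHyperbolic Y := by
  obtain ⟨δ, hδ, hslim⟩ := gromovHyperbolic_iff.1 hhyp
  choose g hg using hf.2.2.2
  have hΛ : 0 ≤ Λ := zero_le_one.trans hf.1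
  obtain ⟨δ', hδ'⟩ := hslim.of_quasiIsometricEmbedding hX hδ hΛ
    (mul_nonneg (by positivity) hf.2.1) hΛ (hf.dist_quasiInverse_le hg) (hf.dist_le_quasiInverse hg)
  exact gromovHyperbolic_iff.2 ⟨max δ' 0, le_max_right _ _, hδ'.mono (le_max_left _ _)⟩

/-- **Gromov hyperbolicity is a quasi-isometry invariant** (for geodesic
spaces). -/
theorem gromovHyperbolic_of_quasiIsometry
    (X Y : Type*) [MetricSpace X] [MetricSpace Y]
    (hX : GeodesicSpace X) (hY : GeodesicSpace Y)
    (Λ C : ℝ) (f : X → Y) (hf : IsQuasiIsometry (X := X) Λ C f)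
    (hhyp : GromovHyperbolic X) : GromovHyperbolic Y :=
  gromovHyperbolic_of_quasiIsometry_general X Y hX Λ C f hf hhyp
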